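/- arXiv:0807.3927 — 2 statements merged into one kernel-verified Lean document; each statement's English description precedes it below -/
import Mathlib

section
/- Let T* > 0, ε₀ > 1, t₀ ∈ (0, T*), and suppose α : [0, T*) → ℝ is continuous with α(t) < 1/(T* - t) - ε₀/((T* - t)·log(1/(T* - t))) for all t ∈ (t₀, T*) (assume T* - t₀ < 1). Then ∫_{t₀}^{T*} (1/(T* - t))·exp(∫_{t₀}^{t} (α(τ) - 1/(T* - τ)) dτ) dt < ∞. -/
open Filter Topology Set MeasureTheory

theorem stmt_8 (Tstar ε₀ t₀ : ℝ) (hT : 0 < Tstar) (hε : 1 < ε₀)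
    (ht₀ : t₀ ∈ Set.Ioo 0 Tstar) (h1 : Tstar - t₀ < 1)
    (a : ℝ → ℝ) (hacont : ContinuousOn a (Set.Ico 0 Tstar))
    (ha : ∀ t ∈ Set.Ioo t₀ Tstar,
      a t < 1/(Tstar - t) - ε₀/((Tstar - t) * Real.log (1/(Tstar - t)))) :
    MeasureTheory.IntegrableOn
      (fun t => (1/(Tstar - t)) * Real.exp (∫ τ in t₀..t, (a τ - 1/(Tstar - τ))))
      (Set.Ioo t₀ Tstar) := by
  obtain ⟨ht₀0, ht₀T⟩ := ht₀
  set b : ℝ → ℝ := fun τ => a τ - 1/(Tstar - τ) with hbdef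
  set L : ℝ → ℝ := fun t => -Real.log (Tstar - t) with hLdef
  set F : ℝ → ℝ := fun t => ∫ τ in t₀..t, b τ with hFdef
  have hopen : IsOpen (Set.Ioo (0:ℝ) Tstar) := isOpen_Ioo
  -- continuity of b on Ioo 0 Tstar
  have hbcontOn : ContinuousOn b (Set.Ioo 0 Tstar) := by
    apply ContinuousOn.sub (hacont.mono Ioo_subset_Ico_self)
    intro x hx
    exact (ContinuousAt.continuousWithinAt
      (continuousAt_const.div (continuousAt_const.sub continuousAt_id)
        (sub_ne_zero.mpr (ne_of_gt hx.2))))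
  have hbcont : ∀ t ∈ Set.Ioo (0:ℝ) Tstar, ContinuousAt b t := fun t ht =>
    hbcontOn.continuousAt (hopen.mem_nhds ht)
  -- F has derivative b t on Ioo 0 Tstar
  have hFderiv : ∀ t ∈ Set.Ioo (0:ℝ) Tstar, HasDerivAt F (b t) t := by
    intro t ht
    have hsub : Set.uIcc t₀ t ⊆ Set.Ioo 0 Tstar :=
      (Set.ordConnected_Ioo).uIcc_subset ⟨ht₀0, ht₀T⟩ ht
    have hint : IntervalIntegrable b MeasureTheory.volume t₀ t :=
      (hbcontOn.mono hsub).intervalIntegrable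
    exact intervalIntegral.integral_hasDerivAt_right hint
      (hbcontOn.stronglyMeasurableAtFilter hopen t ht) (hbcont t ht)
  -- positivity of Tstar - t and L t on Ico t₀ Tstar
  have hst : ∀ t ∈ Set.Ico t₀ Tstar, 0 < Tstar - t ∧ Tstar - t < 1 := by
    intro t ht
    constructor
    · linarith [ht.2]
    · linarith [ht.1]
  have hLpos : ∀ t ∈ Set.Ico t₀ Tstar, 0 < L t := by
    intro t ht
    have := hst t ht
    simpa [hLdef] using Real.log_neg this.1 this.2
  have hLderiv : ∀ t ∈ Set.Ico t₀ Tstar, HasDerivAt L ((Tstar - t)⁻¹) t := by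
    intro t ht
    have h1 : HasDerivAt (fun t : ℝ => Tstar - t) (-1) t := by
      simpa using (hasDerivAt_id t).const_sub Tstar
    have h2 := ((Real.hasDerivAt_log (ne_of_gt (hst t ht).1)).comp t h1).neg
    refine h2.congr_deriv ?_
    ring
  -- the auxiliary decreasing function H
  set H : ℝ → ℝ := fun t => F t + ε₀ * Real.log (L t) with hHdef
  have hHderiv : ∀ t ∈ Set.Ioo t₀ Tstar,
      HasDerivAt H (b t + ε₀ * ((L t)⁻¹ * (Tstar - t)⁻¹)) t := by
    intro t ht
    have ht' : t ∈ Set.Ico t₀ Tstar := ⟨le_of_lt ht.1, ht.2⟩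
    have hF := hFderiv t ⟨lt_trans ht₀0 ht.1, ht.2⟩
    have hlog := ((Real.hasDerivAt_log (ne_of_gt (hLpos t ht'))).comp t
      (hLderiv t ht')).const_mul ε₀
    exact hF.add hlog
  have hHneg : ∀ t ∈ Set.Ioo t₀ Tstar, b t + ε₀ * ((L t)⁻¹ * (Tstar - t)⁻¹) < 0 := by
    intro t ht
    have ht' : t ∈ Set.Ico t₀ Tstar := ⟨le_of_lt ht.1, ht.2⟩
    have hs := (hst t ht').1
    have hL := hLpos t ht'
    have hlogeq : Real.log (1/(Tstar - t)) = L t := by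
      rw [one_div, Real.log_inv]
    have h := ha t ht
    rw [hlogeq] at h
    have heq : ε₀ * ((L t)⁻¹ * (Tstar - t)⁻¹) = ε₀ / ((Tstar - t) * L t) := by
      rw [div_eq_mul_inv, mul_inv]
      ring
    rw [heq]
    have : b t < - (ε₀ / ((Tstar - t) * L t)) := by
      simp only [hbdef]
      linarith
    linarith
  have hHcont : ContinuousOn H (Set.Ico t₀ Tstar) := by
    intro x hx
    have hF := (hFderiv x ⟨lt_of_lt_of_le ht₀0 hx.1, hx.2⟩).continuousAt
    have hLc := (hLderiv x hx).continuousAt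
    have hlc : ContinuousAt (fun t => ε₀ * Real.log (L t)) x :=
      (((Real.continuousAt_log (ne_of_gt (hLpos x hx))).comp hLc).const_mul ε₀)
    exact (hF.add hlc).continuousWithinAt
  have hanti : StrictAntiOn H (Set.Ico t₀ Tstar) := by
    apply strictAntiOn_of_deriv_neg (convex_Ico _ _) hHcont
    intro x hx
    rw [interior_Ico] at hx
    rw [(hHderiv x hx).deriv]
    exact hHneg x hx
  -- key pointwise bound
  set C : ℝ := (L t₀) ^ ε₀ with hCdef
  have ht₀mem : t₀ ∈ Set.Ico t₀ Tstar := ⟨le_refl _, ht₀T⟩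
  have hbound : ∀ t ∈ Set.Ioo t₀ Tstar,
      Real.exp (F t) ≤ C * (L t) ^ (-ε₀) := by
    intro t ht
    have ht' : t ∈ Set.Ico t₀ Tstar := ⟨le_of_lt ht.1, ht.2⟩
    have hHlt : H t < H t₀ := hanti ht₀mem ht' ht.1
    have hFt₀ : F t₀ = 0 := intervalIntegral.integral_same
    have hFlt : F t ≤ ε₀ * Real.log (L t₀) - ε₀ * Real.log (L t) := by
      simp only [hHdef, hFt₀] at hHlt
      linarith
    calc Real.exp (F t) ≤ Real.exp (ε₀ * Real.log (L t₀) - ε₀ * Real.log (L t)) :=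
          Real.exp_le_exp.mpr hFlt
      _ = C * (L t) ^ (-ε₀) := by
          rw [Real.exp_sub, hCdef,
            Real.rpow_def_of_pos (hLpos t₀ ht₀mem), Real.rpow_def_of_pos (hLpos t ht'),
            mul_comm (Real.log (L t₀)), mul_comm (Real.log (L t)), div_eq_mul_inv,
            ← Real.exp_neg]
          ring_nf
  -- the comparison function G with derivative g
  set g : ℝ → ℝ := fun t => (Tstar - t)⁻¹ * (L t) ^ (-ε₀) with hgdef
  set G : ℝ → ℝ := fun t => (1 - ε₀)⁻¹ * (L t) ^ (1 - ε₀) with hGdef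
  have hεne : (1 : ℝ) - ε₀ ≠ 0 := by linarith
  have hGderiv : ∀ t ∈ Set.Ioo t₀ Tstar, HasDerivAt G (g t) t := by
    intro t ht
    have ht' : t ∈ Set.Ico t₀ Tstar := ⟨le_of_lt ht.1, ht.2⟩
    have h1 : HasDerivAt (fun x : ℝ => x ^ (1 - ε₀))
        ((1 - ε₀) * (L t) ^ (1 - ε₀ - 1)) (L t) :=
      Real.hasDerivAt_rpow_const (Or.inl (ne_of_gt (hLpos t ht')))
    have h2 := (h1.comp t (hLderiv t ht')).const_mul ((1 - ε₀)⁻¹)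
    refine h2.congr_deriv ?_
    have : (1 : ℝ) - ε₀ - 1 = -ε₀ := by ring
    rw [hgdef, this]
    field_simp
  have hGcont : ContinuousOn G (Set.Icc t₀ Tstar) := by
    intro x hx
    rcases eq_or_lt_of_le hx.2 with hxT | hxT
    · -- endpoint Tstar
      rw [hxT]
      rw [← Set.Ico_insert_right (le_of_lt ht₀T)]
      rw [continuousWithinAt_insert_self]
      have hGval : G Tstar = 0 := by
        simp [hGdef, hLdef, Real.zero_rpow hεne]
      rw [ContinuousWithinAt, hGval]
      have hsub : Tendsto (fun t => Tstar - t) (𝓝[Set.Ico t₀ Tstar] Tstar) (𝓝[>] 0) := by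
        apply tendsto_nhdsWithin_of_tendsto_nhds_of_eventually_within
        · have : Tendsto (fun t => Tstar - t) (𝓝 Tstar) (𝓝 (Tstar - Tstar)) :=
            (continuous_const.sub continuous_id).tendsto Tstar
          simpa using this.mono_left nhdsWithin_le_nhds
        · exact eventually_mem_nhdsWithin.mono (fun y hy => sub_pos.mpr hy.2)
      have hLtop : Tendsto L (𝓝[Set.Ico t₀ Tstar] Tstar) atTop := by
        have := Real.tendsto_log_nhdsGT_zero.comp hsub
        exact tendsto_neg_atBot_atTop.comp this
      have hrpow : Tendsto (fun t => (L t) ^ (1 - ε₀)) (𝓝[Set.Ico t₀ Tstar] Tstar) (𝓝 0) := by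
        have h0 : (0:ℝ) < ε₀ - 1 := by linarith
        have := (tendsto_rpow_neg_atTop h0).comp hLtop
        have heq : -(ε₀ - 1) = 1 - ε₀ := by ring
        rw [heq] at this
        exact this
      simpa using hrpow.const_mul ((1 - ε₀)⁻¹)
    · -- interior
      have hx' : x ∈ Set.Ico t₀ Tstar := ⟨hx.1, hxT⟩
      have hLc := (hLderiv x hx').continuousAt
      have hr : ContinuousAt (fun y : ℝ => y ^ (1 - ε₀)) (L x) :=
        Real.continuousAt_rpow_const _ _ (Or.inl (ne_of_gt (hLpos x hx')))
      exact (ContinuousAt.mul continuousAt_const (hr.comp hLc)).continuousWithinAt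
  have hgpos : ∀ t ∈ Set.Ioo t₀ Tstar, 0 ≤ g t := by
    intro t ht
    have ht' : t ∈ Set.Ico t₀ Tstar := ⟨le_of_lt ht.1, ht.2⟩
    have := (hst t ht').1
    have := hLpos t ht'
    positivity
  have hgint : MeasureTheory.IntegrableOn g (Set.Ioo t₀ Tstar) :=
    (intervalIntegral.integrableOn_deriv_of_nonneg hGcont hGderiv hgpos).mono_set
      Set.Ioo_subset_Ioc_self
  -- conclude by comparison
  have hCgint : MeasureTheory.IntegrableOn (fun t => C * g t) (Set.Ioo t₀ Tstar) :=
    hgint.const_mul C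
  apply hCgint.mono'
  · -- measurability of f
    apply ContinuousOn.aestronglyMeasurable _ measurableSet_Ioo
    intro x hx
    have hF := (hFderiv x ⟨lt_trans ht₀0 hx.1, hx.2⟩).continuousAt
    have h1 : ContinuousAt (fun t => 1/(Tstar - t)) x :=
      continuousAt_const.div (continuousAt_const.sub continuousAt_id)
        (sub_ne_zero.mpr (ne_of_gt hx.2))
    exact (h1.mul (Real.continuous_exp.continuousAt.comp hF)).continuousWithinAt
  · rw [MeasureTheory.ae_restrict_iff' measurableSet_Ioo]
    filter_upwards with x
    intro hx
    have hx' : x ∈ Set.Ico t₀ Tstar := ⟨le_of_lt hx.1, hx.2⟩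
    have hs := (hst x hx').1
    have hb := hbound x hx
    have hnorm : ‖(1/(Tstar - x)) * Real.exp (F x)‖
        = (Tstar - x)⁻¹ * Real.exp (F x) := by
      rw [Real.norm_eq_abs, abs_of_nonneg]
      · rw [one_div]
      · positivity
    rw [hnorm]
    calc (Tstar - x)⁻¹ * Real.exp (F x)
        ≤ (Tstar - x)⁻¹ * (C * (L x) ^ (-ε₀)) := by
          apply mul_le_mul_of_nonneg_left hb
          positivity
      _ = C * g x := by rw [hgdef]; ring
end

section
/- Let T* > 0, β > 0, ε₀ > 1, t₀ ∈ (0, T*) with T* < 1, and λ : [0, T*) → ℝ continuous satisfying λ(t) < β/(T* - t) - β·ε₀/((T* - t)·log(1/(T* - t))) for all t ∈ (t₀, T*). If Y(t) = Y(0)·exp(∫₀ᵗ (λ(τ) - β/(T* - τ)) dτ) with Y(0) > 0, then ∫_{t₀}^{T*} Y(t)^{1/β}/(T* - t) dt < ∞. -/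
open Filter Topology Set MeasureTheory

theorem stmt_17 (Tstar β ε₀ t₀ : ℝ) (hT : 0 < Tstar) (hT1 : Tstar < 1)
    (hβ : 0 < β) (hε : 1 < ε₀) (ht₀ : t₀ ∈ Set.Ioo 0 Tstar)
    (lam : ℝ → ℝ) (hlam : ContinuousOn lam (Set.Ico 0 Tstar))
    (hup : ∀ t ∈ Set.Ioo t₀ Tstar,
      lam t < β/(Tstar - t) - β*ε₀/((Tstar - t) * Real.log (1/(Tstar - t))))
    (Y : ℝ → ℝ) (hY₀ : 0 < Y 0)
    (hY : ∀ t ∈ Set.Ico (0:ℝ) Tstar,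
      Y t = Y 0 * Real.exp (∫ τ in (0:ℝ)..t, (lam τ - β/(Tstar - τ)))) :
    MeasureTheory.IntegrableOn (fun t => (Y t) ^ (1/β) / (Tstar - t))
      (Set.Ioo t₀ Tstar) := by
  obtain ⟨ht₀0, ht₀T⟩ := ht₀
  set L : ℝ → ℝ := fun t => -Real.log (Tstar - t) with hLdef
  set h : ℝ → ℝ := fun τ => lam τ - β/(Tstar - τ) with hhdef
  set g : ℝ → ℝ := fun t => ∫ τ in (0:ℝ)..t, h τ with hgdef
  have hε' : (1:ℝ) - ε₀ ≠ 0 := sub_ne_zero_of_ne (ne_of_lt hε)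
  -- positivity facts
  have hsubpos : ∀ t ∈ Set.Ico (0:ℝ) Tstar, 0 < Tstar - t := fun t ht => by
    have := ht.2; linarith
  have hLpos : ∀ t ∈ Set.Ico (0:ℝ) Tstar, 0 < L t := by
    intro t ht
    have h1 : 0 < Tstar - t := hsubpos t ht
    have h2 : Tstar - t < 1 := by have := ht.1; linarith
    have := Real.log_neg h1 h2
    simp only [hLdef]; linarith
  -- derivative of L
  have hLderiv : ∀ t ∈ Set.Ico (0:ℝ) Tstar, HasDerivAt L (1/(Tstar - t)) t := by
    intro t ht
    have h1 : Tstar - t ≠ 0 := ne_of_gt (hsubpos t ht)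
    have hd : HasDerivAt (fun s => Tstar - s) (-1) t := by
      simpa using (hasDerivAt_id t).const_sub Tstar
    have := (hd.log h1).neg
    rw [show (1:ℝ)/(Tstar - t) = -(-1/(Tstar - t)) by ring]
    exact this
  -- continuity of h on Ico 0 Tstar
  have hhcont : ContinuousOn h (Set.Ico 0 Tstar) := by
    apply hlam.sub
    apply ContinuousOn.div continuousOn_const
    · exact (continuous_const.sub continuous_id).continuousOn
    · intro t ht; exact ne_of_gt (hsubpos t ht)
  -- derivative of g
  have hgderiv : ∀ t ∈ Set.Ioo (0:ℝ) Tstar, HasDerivAt g (h t) t := by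
    intro t ht
    have hsub : Set.Icc (0:ℝ) t ⊆ Set.Ico 0 Tstar := fun x hx =>
      ⟨hx.1, lt_of_le_of_lt hx.2 ht.2⟩
    have hint : IntervalIntegrable h MeasureTheory.volume 0 t := by
      apply ContinuousOn.intervalIntegrable
      rw [Set.uIcc_of_le (le_of_lt ht.1)]
      exact hhcont.mono hsub
    have hopen : IsOpen (Set.Ioo (0:ℝ) Tstar) := isOpen_Ioo
    have hmeas : StronglyMeasurableAtFilter h (𝓝 t) MeasureTheory.volume :=
      (hhcont.mono Set.Ioo_subset_Ico_self).stronglyMeasurableAtFilter hopen t ht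
    have hcontat : ContinuousAt h t :=
      (hhcont.mono Set.Ioo_subset_Ico_self).continuousAt (hopen.mem_nhds ht)
    exact intervalIntegral.integral_hasDerivAt_right hint hmeas hcontat
  -- Φ and its monotonicity
  set Φ : ℝ → ℝ := fun t => g t + β * ε₀ * Real.log (L t) with hΦdef
  have hΦderiv : ∀ t ∈ Set.Ico t₀ Tstar,
      HasDerivAt Φ (h t + β * ε₀ * ((1/(Tstar - t))/(L t))) t := by
    intro t ht
    have ht' : t ∈ Set.Ico (0:ℝ) Tstar := ⟨le_of_lt (lt_of_lt_of_le ht₀0 ht.1), ht.2⟩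
    have hgd := hgderiv t ⟨lt_of_lt_of_le ht₀0 ht.1, ht.2⟩
    have hLd := hLderiv t ht'
    have hLne : L t ≠ 0 := ne_of_gt (hLpos t ht')
    exact hgd.add ((hLd.log hLne).const_mul (β * ε₀))
  have hΦanti : StrictAntiOn Φ (Set.Ico t₀ Tstar) := by
    apply strictAntiOn_of_deriv_neg (convex_Ico t₀ Tstar)
    · exact fun x hx => (hΦderiv x hx).continuousAt.continuousWithinAt
    · intro x hx
      rw [interior_Ico] at hx
      have hd := hΦderiv x ⟨le_of_lt hx.1, hx.2⟩
      rw [hd.deriv]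
      have hx' : x ∈ Set.Ico (0:ℝ) Tstar := ⟨le_of_lt (lt_trans ht₀0 hx.1), hx.2⟩
      have hsp := hsubpos x hx'
      have hLp := hLpos x hx'
      have hupx := hup x hx
      have hlog : Real.log (1/(Tstar - x)) = L x := by
        rw [one_div, Real.log_inv]
      rw [hlog] at hupx
      have h1 : h x < -(β*ε₀/((Tstar - x) * L x)) := by
        simp only [hhdef]; linarith
      have heq : β * ε₀ * ((1/(Tstar - x))/(L x)) = β*ε₀/((Tstar - x) * L x) := by
        field_simp
      rw [heq]; linarith
  -- the key bound on g
  have hgbound : ∀ t ∈ Set.Ioo t₀ Tstar,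
      g t ≤ Φ t₀ - β * ε₀ * Real.log (L t) := by
    intro t ht
    have h1 : Φ t < Φ t₀ := hΦanti ⟨le_refl t₀, ht₀T⟩ ⟨le_of_lt ht.1, ht.2⟩ ht.1
    simp only [hΦdef] at h1 ⊢
    linarith
  -- constants
  set C : ℝ := (Y 0) ^ (1/β) * Real.exp (Φ t₀ / β) with hCdef
  have hCpos : 0 < C := mul_pos (Real.rpow_pos_of_pos hY₀ _) (Real.exp_pos _)
  -- dominating function and its antiderivative
  set G : ℝ → ℝ := fun t => (C/(1 - ε₀)) * (L t) ^ (1 - ε₀) with hGdef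
  set G' : ℝ → ℝ := fun t => C * (L t) ^ (-ε₀) / (Tstar - t) with hG'def
  have hGderiv : ∀ t ∈ Set.Ico (0:ℝ) Tstar, HasDerivAt G (G' t) t := by
    intro t ht
    have hLd := hLderiv t ht
    have hLne : L t ≠ 0 := ne_of_gt (hLpos t ht)
    have hd := (hLd.rpow_const (p := 1 - ε₀) (Or.inl hLne)).const_mul (C/(1 - ε₀))
    have hexp : (1 - ε₀) - 1 = -ε₀ := by ring
    rw [hexp] at hd
    convert hd using 1
    case e'_4 => rfl
    case e'_5 => rfl
    have hne2 : Tstar - t ≠ 0 := ne_of_gt (hsubpos t ht)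
    simp only [hG'def]
    field_simp [hε', hne2]
  have hG'nonneg : ∀ t ∈ Set.Ioo t₀ Tstar, 0 ≤ G' t := by
    intro t ht
    have ht' : t ∈ Set.Ico (0:ℝ) Tstar := ⟨le_of_lt (lt_trans ht₀0 ht.1), ht.2⟩
    exact div_nonneg (mul_nonneg (le_of_lt hCpos)
      (Real.rpow_nonneg (le_of_lt (hLpos t ht')) _)) (le_of_lt (hsubpos t ht'))
  -- continuity of G on Icc t₀ Tstar
  have hGcont : ContinuousOn G (Set.Icc t₀ Tstar) := by
    intro x hx
    rcases eq_or_lt_of_le hx.2 with hxe | hxl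
    · -- x = Tstar : continuity via limit 0
      subst hxe
      have hGx : G x = 0 := by
        simp only [hGdef, hLdef, sub_self, Real.log_zero, neg_zero]
        rw [Real.zero_rpow hε']
        ring
      rw [ContinuousWithinAt, hGx]
      have hsub2 : Set.Icc t₀ x ⊆ Set.Iic x := Set.Icc_subset_Iic_self
      apply Filter.Tendsto.mono_left _ (nhdsWithin_mono x hsub2)
      have hIic : Set.Iic x = Set.Iio x ∪ {x} := by
        ext y; simp [le_iff_lt_or_eq]
      rw [hIic, nhdsWithin_union, Filter.tendsto_sup]
      constructor
      · -- within Iio x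
        have h1 : Filter.Tendsto (fun t => x - t) (𝓝[<] x) (𝓝[>] 0) := by
          apply tendsto_nhdsWithin_of_tendsto_nhds_of_eventually_within
          · have h0 : Filter.Tendsto (fun t => x - t) (𝓝 x) (𝓝 (x - x)) :=
              (continuous_const.sub continuous_id).continuousAt
            rw [sub_self] at h0
            exact h0.mono_left nhdsWithin_le_nhds
          · filter_upwards [self_mem_nhdsWithin] with t ht
            exact Set.mem_Ioi.mpr (sub_pos.mpr ht)
        have h2 : Filter.Tendsto Real.log (𝓝[>] (0:ℝ)) Filter.atBot :=
          Real.tendsto_log_nhdsGT_zero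
        have hLtop : Filter.Tendsto L (𝓝[<] x) Filter.atTop := by
          have h5 : Filter.Tendsto (fun t => -Real.log (x - t)) (𝓝[<] x) Filter.atTop :=
            tendsto_neg_atTop_iff.mpr (h2.comp h1)
          exact h5
        have h3 : Filter.Tendsto (fun y : ℝ => y ^ (1 - ε₀)) Filter.atTop (𝓝 0) := by
          have := tendsto_rpow_neg_atTop (by linarith : (0:ℝ) < ε₀ - 1)
          simpa [neg_sub] using this
        have h4 := (h3.comp hLtop).const_mul (C/(1 - ε₀))
        simp only [Function.comp, mul_zero] at h4
        simpa [hGdef] using h4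
      · -- within {x}
        rw [nhdsWithin_singleton, Filter.tendsto_pure_left]
        intro s hs
        exact hGx ▸ mem_of_mem_nhds hs
    · -- x < Tstar : G differentiable hence continuous
      have hx' : x ∈ Set.Ico (0:ℝ) Tstar := ⟨le_trans (le_of_lt ht₀0) hx.1, hxl⟩
      exact (hGderiv x hx').continuousAt.continuousWithinAt
  -- G' integrable on Ioo t₀ Tstar
  have hG'int : MeasureTheory.IntegrableOn G' (Set.Ioo t₀ Tstar) := by
    have := intervalIntegral.integrableOn_deriv_of_nonneg hGcont
      (fun x hx => hGderiv x ⟨le_of_lt (lt_trans ht₀0 hx.1), hx.2⟩) hG'nonneg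
    exact this.mono_set Set.Ioo_subset_Ioc_self
  -- the target function equals a continuous formula on the set, and is bounded by G'
  set F : ℝ → ℝ := fun t => (Y 0 * Real.exp (g t)) ^ (1/β) / (Tstar - t) with hFdef
  have hFnonneg : ∀ t ∈ Set.Ioo t₀ Tstar, 0 ≤ F t := by
    intro t ht
    have ht' : t ∈ Set.Ico (0:ℝ) Tstar := ⟨le_of_lt (lt_trans ht₀0 ht.1), ht.2⟩
    exact div_nonneg (Real.rpow_nonneg
      (mul_nonneg (le_of_lt hY₀) (le_of_lt (Real.exp_pos _))) _) (le_of_lt (hsubpos t ht'))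
  have hFbound : ∀ t ∈ Set.Ioo t₀ Tstar, F t ≤ G' t := by
    intro t ht
    have ht' : t ∈ Set.Ico (0:ℝ) Tstar := ⟨le_of_lt (lt_trans ht₀0 ht.1), ht.2⟩
    have hsp := hsubpos t ht'
    have hLp := hLpos t ht'
    have hgb := hgbound t ht
    have hnum : (Y 0 * Real.exp (g t)) ^ (1/β) ≤ C * (L t) ^ (-ε₀) := by
      rw [Real.mul_rpow (le_of_lt hY₀) (le_of_lt (Real.exp_pos _))]
      have hexp1 : (Real.exp (g t)) ^ ((1:ℝ)/β) = Real.exp (g t / β) := by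
        rw [← Real.exp_mul, mul_one_div]
      rw [hexp1, hCdef, mul_assoc]
      apply mul_le_mul_of_nonneg_left _ (le_of_lt (Real.rpow_pos_of_pos hY₀ _))
      have hrpow : (L t) ^ (-ε₀) = Real.exp (Real.log (L t) * (-ε₀)) := by
        rw [Real.rpow_def_of_pos hLp]
      rw [hrpow, ← Real.exp_add]
      apply Real.exp_le_exp.mpr
      have h2 : g t / β ≤ (Φ t₀ - β*ε₀*Real.log (L t))/β := by
        apply div_le_div_of_nonneg_right hgb hβ.le |>.trans_eq rfl
      have h3 : (Φ t₀ - β*ε₀*Real.log (L t))/β = Φ t₀/β + Real.log (L t) * (-ε₀) := by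
        field_simp; ring
      linarith [h3 ▸ h2]
    calc F t ≤ C * (L t) ^ (-ε₀) / (Tstar - t) :=
          div_le_div_of_nonneg_right hnum hsp.le |>.trans_eq rfl
      _ = G' t := rfl
  -- F is integrable on Ioo t₀ Tstar
  have hFcont : ContinuousOn F (Set.Ioo t₀ Tstar) := by
    intro x hx
    have hx0 : x ∈ Set.Ioo (0:ℝ) Tstar := ⟨lt_trans ht₀0 hx.1, hx.2⟩
    have hgc : ContinuousAt g x := (hgderiv x hx0).continuousAt
    have hx' : x ∈ Set.Ico (0:ℝ) Tstar := ⟨le_of_lt hx0.1, hx0.2⟩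
    have hbase : ContinuousAt (fun t => Y 0 * Real.exp (g t)) x :=
      continuousAt_const.mul (Real.continuous_exp.continuousAt.comp hgc)
    have hne : Y 0 * Real.exp (g x) ≠ 0 :=
      ne_of_gt (mul_pos hY₀ (Real.exp_pos _))
    have hnum : ContinuousAt (fun t => (Y 0 * Real.exp (g t)) ^ ((1:ℝ)/β)) x :=
      hbase.rpow_const (Or.inl hne)
    have hden : ContinuousAt (fun t => Tstar - t) x :=
      (continuous_const.sub continuous_id).continuousAt
    exact (hnum.div hden (ne_of_gt (hsubpos x hx'))).continuousWithinAt
  have hFmeas : AEStronglyMeasurable F (MeasureTheory.volume.restrict (Set.Ioo t₀ Tstar)) :=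
    hFcont.aestronglyMeasurable measurableSet_Ioo
  have hFint : MeasureTheory.IntegrableOn F (Set.Ioo t₀ Tstar) := by
    apply hG'int.mono' hFmeas
    rw [MeasureTheory.ae_restrict_iff' measurableSet_Ioo]
    filter_upwards with t ht
    rw [Real.norm_of_nonneg (hFnonneg t ht)]
    exact hFbound t ht
  -- conclude
  apply hFint.congr_fun _ measurableSet_Ioo
  intro t ht
  have ht' : t ∈ Set.Ico (0:ℝ) Tstar := ⟨le_of_lt (lt_trans ht₀0 ht.1), ht.2⟩
  simp only [hFdef]
  rw [hY t ht']
end
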